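/- A point (0, 0, p, s) ∈ ℂ⁴ belongs to 𝔽 if and only if (s, −p) ∈ 𝔾₂. -/

import Mathlib

/-- The operator norm of a 2×2 complex matrix, acting on the Euclidean space ℂ². -/
noncomputable def opNorm (A : Matrix (Fin 2) (Fin 2) ℂ) : ℝ :=
  ‖LinearMap.toContinuousLinearMap (Matrix.toEuclideanLin A)‖

/-- The domain 𝔽 = {(a₁₁, a₂₂, det A, a₁₂ + a₂₁) : A ∈ M₂(ℂ), ‖A‖ < 1}. -/
noncomputable def domF : Set (ℂ × ℂ × ℂ × ℂ) :=
  {w | ∃ A : Matrix (Fin 2) (Fin 2) ℂ, opNorm A < 1 ∧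
    w = (A 0 0, A 1 1, A.det, A 0 1 + A 1 0)}

/-- The symmetrized bidisc 𝔾₂. -/
def G2 : Set (ℂ × ℂ) :=
  {w | ∃ z1 z2 : ℂ, ‖z1‖ < 1 ∧ ‖z2‖ < 1 ∧ w = (z1 + z2, z1 * z2)}

/-!
A matrix with zero diagonal has `det A = -a₁₂ a₂₁`, so such a point has
`(s, -p) = (a₁₂ + a₂₁, a₁₂ a₂₁)`, and every entry is bounded by the operator norm.
Conversely, for `z₁, z₂` in the disc the antidiagonal matrix with entries `z₁, z₂`
has operator norm `max |z₁| |z₂| < 1`.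
-/

open Matrix
open scoped Matrix.Norms.L2Operator

lemma Matrix.norm_entry_le_l2_opNorm {𝕜 m n : Type*} [RCLike 𝕜] [Fintype m] [Fintype n]
    [DecidableEq n] (A : Matrix m n 𝕜) (i : m) (j : n) : ‖A i j‖ ≤ ‖A‖ :=
  calc ‖A i j‖ = ‖(EuclideanSpace.equiv m 𝕜).symm (A *ᵥ EuclideanSpace.single j 1) i‖ := by
        simp
    _ ≤ ‖(EuclideanSpace.equiv m 𝕜).symm (A *ᵥ EuclideanSpace.single j 1)‖ :=
        PiLp.norm_apply_le _ i
    _ ≤ ‖A‖ := by simpa using A.l2_opNorm_mulVec (EuclideanSpace.single j (1 : 𝕜))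

/-- The upper bound comes from the C⋆-identity: `Aᴴ * A = diagonal ![‖b‖², ‖a‖²]`. -/
lemma Matrix.l2_opNorm_antidiagonal {𝕜 : Type*} [RCLike 𝕜] (a b : 𝕜) :
    ‖!![0, a; b, 0]‖ = max ‖a‖ ‖b‖ := by
  set A : Matrix (Fin 2) (Fin 2) 𝕜 := !![0, a; b, 0]
  have hAA : Aᴴ * A = diagonal ![(‖b‖ : 𝕜) ^ 2, (‖a‖ : 𝕜) ^ 2] := by
    ext i j
    fin_cases i <;> fin_cases j <;> simp [A, Matrix.mul_apply, RCLike.conj_mul]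
  refine le_antisymm ?_ (max_le (A.norm_entry_le_l2_opNorm 0 1) (A.norm_entry_le_l2_opNorm 1 0))
  have hc : 0 ≤ max ‖a‖ ‖b‖ := le_max_of_le_left (norm_nonneg a)
  rw [mul_self_le_mul_self_iff (norm_nonneg A) hc, ← l2_opNorm_conjTranspose_mul_self, hAA,
    l2_opNorm_diagonal, pi_norm_le_iff_of_nonneg (mul_self_nonneg _)]
  intro i
  fin_cases i
  · simpa [← sq] using pow_le_pow_left₀ (norm_nonneg b) (le_max_right ‖a‖ ‖b‖) 2
  · simpa [← sq] using pow_le_pow_left₀ (norm_nonneg a) (le_max_left ‖a‖ ‖b‖) 2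

lemma opNorm_eq_l2_opNorm (A : Matrix (Fin 2) (Fin 2) ℂ) : opNorm A = ‖A‖ := rfl

/-- Proposition 2.8: (0, 0, p, s) ∈ 𝔽 iff (s, −p) ∈ 𝔾₂. -/
theorem stmt7 (p s : ℂ) :
    ((0 : ℂ), (0 : ℂ), p, s) ∈ domF ↔ (s, -p) ∈ G2 := by
  simp only [domF, G2, opNorm_eq_l2_opNorm, Set.mem_ofPred_eq, Prod.ext_iff]
  constructor
  · rintro ⟨A, hA, h00, h11, rfl, rfl⟩
    refine ⟨A 0 1, A 1 0, (A.norm_entry_le_l2_opNorm 0 1).trans_lt hA,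
      (A.norm_entry_le_l2_opNorm 1 0).trans_lt hA, rfl, ?_⟩
    rw [det_fin_two, ← h00, ← h11]
    ring
  · rintro ⟨a, b, ha, hb, rfl, hp⟩
    refine ⟨!![0, a; b, 0], ?_, by simp, by simp, ?_, by simp⟩
    · rw [l2_opNorm_antidiagonal]
      exact max_lt ha hb
    · rw [det_fin_two_of]
      linear_combination -hp
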